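/- Let V be an (n-k)-dimensional subspace of R^n such that every v ∈ V satisfies var(v) ≤ n-k-1 (i.e., V ∈ Gr_{n-k,n}^{≥0}), and suppose columns indexed by a set I ⊆ [n] of a matrix representing V behave as follows: there exists u ∈ V and indices a < c with u vanishing on I \ {a}, u_a ≠ 0, u_c ≠ 0. If additionally for each i ∈ I \ {a} there is a vector v^{(i)} ∈ V with v^{(i)}_i = 1 and v^{(i)}_j = 0 for j ∈ I \ {i}, and |I| = n-k with a ∈ I, then sign(u_c) = (-1)^{|I ∩ (a,c)|} sign(u_a). -/

import Mathlib

open scoped BigOperators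

/-- Number of sign changes between consecutive entries of a list of reals. -/
noncomputable def listVar : List ℝ → ℕ
  | a :: b :: t => (if a * b < 0 then 1 else 0) + listVar (b :: t)
  | _ => 0

/-- `var v` : the number of sign changes of `v`, ignoring zero entries. -/
noncomputable def var {n : ℕ} (v : Fin n → ℝ) : ℕ :=
  listVar ((List.ofFn v).filter (fun x => x ≠ 0))

/-- `varbar v` : the maximum of `var w` over all `w` agreeing with `v` on the
nonzero entries of `v`. -/
noncomputable def varbar {n : ℕ} (v : Fin n → ℝ) : ℕ :=
  sSup {m | ∃ w : Fin n → ℝ, (∀ i, v i ≠ 0 → w i = v i) ∧ var w = m}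

/-- `altv v = (v 0, -v 1, v 2, ...)`. -/
def altv {n : ℕ} (v : Fin n → ℝ) : Fin n → ℝ := fun i => (-1 : ℝ) ^ (i : ℕ) * v i

/-- A vector with entries in `{0, 1, -1}`, representing a sign vector. -/
def IsSignVec {n : ℕ} (σ : Fin n → ℝ) : Prop := ∀ i, σ i = 0 ∨ σ i = 1 ∨ σ i = -1

lemma listVar_nil : listVar [] = 0 := rfl
lemma listVar_single (x : ℝ) : listVar [x] = 0 := rfl
lemma listVar_cons_cons (x y : ℝ) (t : List ℝ) :
    listVar (x :: y :: t) = (if x * y < 0 then 1 else 0) + listVar (y :: t) := rfl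

lemma listVar_le_cons (x : ℝ) (l : List ℝ) : listVar l ≤ listVar (x :: l) := by
  cases l with
  | nil => simp [listVar]
  | cons b t => rw [listVar_cons_cons]; omega

lemma sign_triangle {b x y : ℝ} (hx : x ≠ 0) (h : b * y < 0) : b * x < 0 ∨ x * y < 0 := by
  by_contra h'
  push_neg at h'
  nlinarith [mul_nonneg h'.1 h'.2, mul_self_pos.mpr hx]

lemma listVar_cons_trineq (b x : ℝ) (hx : x ≠ 0) (t : List ℝ) :
    listVar (b :: t) ≤ (if b * x < 0 then 1 else 0) + listVar (x :: t) := by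
  cases t with
  | nil => simp [listVar]
  | cons y r =>
    simp only [listVar_cons_cons]
    by_cases hby : b * y < 0
    · rcases sign_triangle hx hby with h | h <;> simp [h, hby]
    · simp [hby]; omega

lemma listVar_cons_sublist {t' t : List ℝ} (h : t'.Sublist t) (ht : ∀ y ∈ t, y ≠ 0) :
    ∀ x : ℝ, listVar (x :: t') ≤ listVar (x :: t) := by
  induction h with
  | slnil => intro x; exact le_refl _
  | @cons t' t₂ y h ih =>
    intro x
    have hy : y ≠ 0 := ht y List.mem_cons_self
    have ht₂ : ∀ z ∈ t₂, z ≠ 0 := fun z hz => ht z (List.mem_cons_of_mem _ hz)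
    calc listVar (x :: t') ≤ listVar (x :: t₂) := ih ht₂ x
    _ ≤ (if x * y < 0 then 1 else 0) + listVar (y :: t₂) := listVar_cons_trineq x y hy t₂
    _ = listVar (x :: y :: t₂) := (listVar_cons_cons x y t₂).symm
  | @cons_cons t' t₂ y h ih =>
    intro x
    have ht₂ : ∀ z ∈ t₂, z ≠ 0 := fun z hz => ht z (List.mem_cons_of_mem _ hz)
    rw [listVar_cons_cons, listVar_cons_cons]
    exact Nat.add_le_add_left (ih ht₂ y) _

lemma listVar_sublist {l' l : List ℝ} (h : l'.Sublist l) (hl : ∀ x ∈ l, x ≠ 0) :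
    listVar l' ≤ listVar l := by
  induction h with
  | slnil => exact le_refl _
  | @cons l' t x h ih =>
    exact le_trans (ih (fun z hz => hl z (List.mem_cons_of_mem _ hz))) (listVar_le_cons x t)
  | @cons_cons l' t x h ih =>
    exact listVar_cons_sublist h (fun z hz => hl z (List.mem_cons_of_mem _ hz)) x

lemma le_listVar_of_chain : ∀ l : List ℝ, l.Chain' (fun p q => p * q < 0) →
    l.length - 1 ≤ listVar l := by
  intro l
  induction l with
  | nil => intro _; simp
  | cons x t ih =>
    intro h
    cases t with
    | nil => simp
    | cons y r =>
      rw [listVar_cons_cons]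
      have h1 := List.isChain_cons_cons.mp h
      have := ih h1.2
      simp only [List.length_cons] at *
      simp [h1.1]
      omega

lemma sorted_map_sublist_ofFn {n : ℕ} (w : Fin n → ℝ) (L : List (Fin n))
    (hL : L.Pairwise (· < ·)) : (L.map w).Sublist (List.ofFn w) := by
  rw [List.ofFn_eq_map]
  apply List.Sublist.map
  haveI : IsAntisymm (Fin n) (· < ·) := ⟨fun a b h1 h2 => absurd h2 (asymm h1)⟩
  exact List.sublist_of_subperm_of_pairwise
    (hL.nodup.subperm (fun x _ => List.mem_finRange x)) hL (List.pairwise_lt_finRange n)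

lemma card_filter_lt_get {n : ℕ} (S : Finset (Fin n)) (L : List (Fin n))
    (hLS : ∀ x, x ∈ L ↔ x ∈ S) (hL : L.Pairwise (· < ·)) (p : ℕ) (hp : p < L.length) :
    (S.filter (fun x => x < L.get ⟨p, hp⟩)).card = p := by
  classical
  have hnd : L.Nodup := hL.nodup
  have hmono := hL.sortedLT.strictMono_get
  have hset : S.filter (fun x => x < L.get ⟨p, hp⟩) = (L.take p).toFinset := by
    ext x
    simp only [Finset.mem_filter, List.mem_toFinset, List.mem_take_iff_getElem]
    constructor
    · rintro ⟨hxS, hxlt⟩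
      obtain ⟨q, hq, rfl⟩ := List.mem_iff_getElem.mp ((hLS _).mpr hxS)
      have hqp : (⟨q, hq⟩ : Fin L.length) < ⟨p, hp⟩ := by
        refine hmono.lt_iff_lt.mp ?_
        simpa [List.get_eq_getElem] using hxlt
      exact ⟨q, by simp [Fin.lt_def] at hqp; omega, rfl⟩
    · rintro ⟨q, hq, rfl⟩
      have hq' : q < L.length := lt_of_lt_of_le hq (min_le_right _ _)
      refine ⟨(hLS _).mp (List.getElem_mem _), ?_⟩
      have : (⟨q, hq'⟩ : Fin L.length) < ⟨p, hp⟩ := by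
        simp only [Fin.lt_def]; omega
      simpa [List.get_eq_getElem] using hmono this
  rw [hset, List.toFinset_card_of_nodup (hnd.sublist (List.take_sublist p L)),
    List.length_take]
  omega

set_option maxHeartbeats 1000000 in
theorem stmt16 (n k : ℕ) (V : Submodule ℝ (Fin n → ℝ))
    (hVdim : Module.finrank ℝ V = n - k)
    (hV : ∀ v ∈ V, var (fun i => v i) ≤ n - k - 1)
    (I : Finset (Fin n)) (hI : I.card = n - k)
    (a c : Fin n) (hac : a < c) (haI : a ∈ I)
    (u : Fin n → ℝ) (huV : u ∈ V)
    (huI : ∀ i ∈ I, i ≠ a → u i = 0) (hua : u a ≠ 0) (huc : u c ≠ 0)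
    (hbasis : ∀ i ∈ I, i ≠ a → ∃ v ∈ V, v i = 1 ∧ ∀ j ∈ I, j ≠ i → v j = 0) :
    0 < (-1 : ℝ) ^ ((I.filter (fun i => a < i ∧ i < c)).card) * u a * u c := by
  classical
  set m := (I.filter (fun i => a < i ∧ i < c)).card with hm
  by_contra hcon
  push_neg at hcon
  have hne : ((-1 : ℝ) ^ m * u a * u c) ≠ 0 :=
    mul_ne_zero (mul_ne_zero (pow_ne_zero _ (by norm_num)) hua) huc
  have hlt : (-1 : ℝ) ^ m * u a * u c < 0 := lt_of_le_of_ne hcon hne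
  have hacne : a ≠ c := ne_of_lt hac
  have hcI : c ∉ I := fun h => huc (huI c h (Ne.symm hacne))
  -- choose basis vectors
  have hb' : ∀ i : Fin n, ∃ v : Fin n → ℝ,
      (i ∈ I → i ≠ a → v ∈ V ∧ v i = 1 ∧ ∀ j ∈ I, j ≠ i → v j = 0) := by
    intro i
    by_cases h : i ∈ I ∧ i ≠ a
    · obtain ⟨v, hv1, hv2, hv3⟩ := hbasis i h.1 h.2
      exact ⟨v, fun _ _ => ⟨hv1, hv2, hv3⟩⟩
    · exact ⟨0, fun h1 h2 => absurd ⟨h1, h2⟩ h⟩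
  choose v hv using hb'
  set S : Finset (Fin n) := insert c I with hS
  have hcardS : S.card = I.card + 1 := Finset.card_insert_of_notMem hcI
  set pos : Fin n → ℕ := fun j => (S.filter (fun x => x < j)).card with hpos
  set sgn : ℝ := if 0 < u a then 1 else -1 with hsgn
  have hsgnua : 0 < sgn * u a := by
    rcases hua.lt_or_gt with h | h
    · rw [hsgn, if_neg (not_lt.mpr h.le)]; nlinarith
    · rw [hsgn, if_pos h]; nlinarith
  have hsgn2 : sgn * sgn = 1 := by rw [hsgn]; split_ifs <;> norm_num
  have hneg : ∀ e : ℕ, ((-1 : ℝ) ^ e) * ((-1 : ℝ) ^ e) = 1 := fun e => by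
    rw [← pow_add]; exact Even.neg_one_pow ⟨e, rfl⟩
  set τ : Fin n → ℝ := fun j => (-1 : ℝ) ^ (pos j + pos a) * sgn with hτ
  have hτsq : ∀ j, τ j * τ j = 1 := by
    intro j
    have h1 := hneg (pos j + pos a)
    calc τ j * τ j
        = ((-1 : ℝ) ^ (pos j + pos a) * (-1 : ℝ) ^ (pos j + pos a)) * (sgn * sgn) := by
          rw [hτ]; ring
    _ = 1 := by rw [h1, hsgn2, one_mul]
  have hτabs : ∀ j, |τ j| = 1 := by
    intro j
    have h1 := hτsq j
    have h2 : |τ j| * |τ j| = 1 := by rw [← abs_mul, h1, abs_one]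
    nlinarith [abs_nonneg (τ j)]
  -- the perturbation size
  set Bc : ℝ := ∑ i ∈ I.erase a, |v i c| with hBc
  have hBc0 : 0 ≤ Bc := Finset.sum_nonneg (fun i _ => abs_nonneg _)
  set ε : ℝ := |u c| / (2 * (Bc + 1)) with hε
  have hε0 : 0 < ε := div_pos (abs_pos.mpr huc) (by linarith)
  have hεmul : ε * (2 * (Bc + 1)) = |u c| := div_mul_cancel₀ _ (by positivity)
  set w : Fin n → ℝ := u + ε • ∑ i ∈ I.erase a, τ i • v i with hw
  have hwj : ∀ j, w j = u j + ε * ∑ i ∈ I.erase a, τ i * v i j := by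
    intro j
    rw [hw]
    simp [Finset.sum_apply, Pi.smul_apply, smul_eq_mul]
  have hvV : ∀ i ∈ I.erase a, v i ∈ V := fun i hi =>
    (hv i (Finset.mem_of_mem_erase hi) (Finset.ne_of_mem_erase hi)).1
  have hwV : w ∈ V := by
    rw [hw]
    exact V.add_mem huV (V.smul_mem _ (Submodule.sum_mem _
      (fun i hi => V.smul_mem _ (hvV i hi))))
  have hwa : w a = u a := by
    rw [hwj]
    have hz : ∀ i ∈ I.erase a, τ i * v i a = 0 := by
      intro i hi
      rw [(hv i (Finset.mem_of_mem_erase hi) (Finset.ne_of_mem_erase hi)).2.2 a haI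
        (Ne.symm (Finset.ne_of_mem_erase hi))]
      ring
    rw [Finset.sum_eq_zero hz]; ring
  have hwi : ∀ i ∈ I.erase a, w i = ε * τ i := by
    intro i hi
    have hiI := Finset.mem_of_mem_erase hi
    have hia := Finset.ne_of_mem_erase hi
    rw [hwj, huI i hiI hia]
    have hsum1 : ∑ x ∈ I.erase a, τ x * v x i = τ i * v i i := by
      apply Finset.sum_eq_single_of_mem i hi
      intro j hj hji
      rw [(hv j (Finset.mem_of_mem_erase hj) (Finset.ne_of_mem_erase hj)).2.2 i hiI
        (Ne.symm hji)]
      ring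
    rw [hsum1, (hv i hiI hia).2.1]; ring
  -- sign at c
  set X : ℝ := ∑ i ∈ I.erase a, τ i * v i c with hX
  have hwc : w c = u c + ε * X := hwj c
  have hsum : |X| ≤ Bc := by
    rw [hX, hBc]
    refine le_trans (Finset.abs_sum_le_sum_abs _ _) (le_of_eq ?_)
    apply Finset.sum_congr rfl
    intro i _
    rw [abs_mul, hτabs, one_mul]
  have hwc_pos : 0 < u c * w c := by
    have h2 : ε * Bc < |u c| := by nlinarith
    have h3 : |ε * X| ≤ ε * Bc := by
      rw [abs_mul, abs_of_pos hε0]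
      exact mul_le_mul_of_nonneg_left hsum hε0.le
    have h4 : |ε * X| < |u c| := lt_of_le_of_lt h3 h2
    rw [hwc]
    rcases huc.lt_or_gt with h | h
    · have h5 := (abs_lt.mp h4).2
      rw [abs_of_neg h] at h5
      nlinarith
    · have h5 := (abs_lt.mp h4).1
      rw [abs_of_pos h] at h5
      nlinarith
  -- position bookkeeping
  have hposa : pos a = (I.filter (fun x => x < a)).card := by
    rw [hpos]
    simp only
    rw [hS, Finset.filter_insert, if_neg (not_lt.mpr hac.le)]
  have hposc' : pos c = (I.filter (fun x => x < c)).card := by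
    rw [hpos]
    simp only
    rw [hS, Finset.filter_insert, if_neg (lt_irrefl c)]
  have hsplit : I.filter (fun x => x < c)
      = insert a ((I.filter (fun x => x < a)) ∪ (I.filter (fun i => a < i ∧ i < c))) := by
    ext x
    simp only [Finset.mem_insert, Finset.mem_union, Finset.mem_filter]
    constructor
    · rintro ⟨hxI, hxc⟩
      rcases lt_trichotomy x a with h | h | h
      · exact Or.inr (Or.inl ⟨hxI, h⟩)
      · exact Or.inl h
      · exact Or.inr (Or.inr ⟨hxI, h, hxc⟩)
    · rintro (rfl | ⟨hxI, h⟩ | ⟨hxI, h1, h2⟩)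
      · exact ⟨haI, hac⟩
      · exact ⟨hxI, h.trans hac⟩
      · exact ⟨hxI, h2⟩
  have hdisj : Disjoint (I.filter (fun x => x < a)) (I.filter (fun i => a < i ∧ i < c)) := by
    rw [Finset.disjoint_left]
    intro x h1 h2
    simp only [Finset.mem_filter] at h1 h2
    exact absurd (h1.2.trans h2.2.1) (lt_irrefl x)
  have hanotin : a ∉ (I.filter (fun x => x < a)) ∪ (I.filter (fun i => a < i ∧ i < c)) := by
    simp [lt_irrefl]
  have hposc : pos c = pos a + 1 + m := by
    rw [hposc', hposa, hsplit, Finset.card_insert_of_notMem hanotin,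
      Finset.card_union_of_disjoint hdisj, hm]
    ring
  -- sign of w on S
  have hsign : ∀ j ∈ S, 0 < w j * τ j := by
    intro j hj
    rcases Finset.mem_insert.mp hj with rfl | hjI
    · -- j = c
      have hτc : τ j = ((-1 : ℝ) ^ m * -1) * sgn := by
        rw [hτ]
        simp only
        rw [hposc, show (pos a + 1 + m) + pos a = (pos a + pos a) + (m + 1) from by omega,
          pow_add, Even.neg_one_pow ⟨pos a, rfl⟩, one_mul, pow_succ]
      have hucτ : 0 < u j * τ j := by
        rw [hτc]
        nlinarith [mul_neg_of_neg_of_pos hlt hsgnua, mul_self_pos.mpr hua]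
      nlinarith [mul_pos hwc_pos hucτ, mul_self_pos.mpr huc]
    · rcases eq_or_ne j a with rfl | hja
      · rw [hwa, hτ]
        simp only
        rw [Even.neg_one_pow ⟨pos j, rfl⟩, one_mul, mul_comm]
        exact hsgnua
      · have hj' : j ∈ I.erase a := Finset.mem_erase.mpr ⟨hja, hjI⟩
        rw [hwi j hj', mul_assoc, hτsq j, mul_one]
        exact hε0
  have hwne : ∀ j ∈ S, w j ≠ 0 := by
    intro j hj h0
    have := hsign j hj
    rw [h0, zero_mul] at this
    exact lt_irrefl 0 this
  -- the sorted list
  set L : List (Fin n) := S.sort (· ≤ ·) with hL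
  have hLmem : ∀ x, x ∈ L ↔ x ∈ S := fun x => Finset.mem_sort _
  have hLsort : L.Pairwise (· < ·) := (Finset.sortedLT_sort S).pairwise
  have hLlen : L.length = n - k + 1 := by
    rw [hL, Finset.length_sort, hcardS, hI]
  have hposL : ∀ (p : ℕ) (hp : p < L.length), pos (L.get ⟨p, hp⟩) = p := by
    intro p hp
    exact card_filter_lt_get S L hLmem hLsort p hp
  have hchain : (L.map w).Chain' (fun p q => p * q < 0) := by
    unfold List.Chain'
    rw [List.isChain_map, List.isChain_iff_getElem]
    intro p hp
    have hp1 : p < L.length := by omega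
    have hp2 : p + 1 < L.length := by omega
    set j : Fin n := L.get ⟨p, hp1⟩ with hj
    set j' : Fin n := L.get ⟨p + 1, hp2⟩ with hj'
    have hjS : j ∈ S := (hLmem j).mp (List.get_mem L ⟨p, hp1⟩)
    have hj'S : j' ∈ S := (hLmem j').mp (List.get_mem L ⟨p + 1, hp2⟩)
    have hpj : pos j = p := hposL p hp1
    have hpj' : pos j' = p + 1 := hposL (p + 1) hp2
    have e3 : τ j * τ j' = -1 := by
      rw [hτ]
      simp only
      rw [hpj, hpj', show p + 1 + pos a = (p + pos a) + 1 from by omega, pow_succ]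
      have h1 := hneg (p + pos a)
      linear_combination (-(sgn * sgn)) * h1 - hsgn2
    have h1 := hsign j hjS
    have h2 := hsign j' hj'S
    have e1 := hτsq j
    have e2 := hτsq j'
    have key : w j * w j' = -((w j * τ j) * (w j' * τ j')) := by
      calc w j * w j' = (w j * w j') * ((τ j * τ j) * (τ j' * τ j')) := by
            rw [e1, e2]; ring
      _ = ((w j * τ j) * (w j' * τ j')) * (τ j * τ j') := by ring
      _ = -((w j * τ j) * (w j' * τ j')) := by rw [e3]; ring
    have := mul_pos h1 h2
    show w j * w j' < 0
    rw [key]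
    linarith
  have hlb : n - k ≤ listVar (L.map w) := by
    have h1 := le_listVar_of_chain (L.map w) hchain
    rw [List.length_map, hLlen] at h1
    omega
  have hsub : (L.map w).Sublist ((List.ofFn w).filter (fun x => x ≠ 0)) := by
    have h1 := sorted_map_sublist_ofFn w L hLsort
    have h3 : (L.map w).filter (fun x => x ≠ 0) = L.map w := by
      apply List.filter_eq_self.mpr
      intro x hx
      obtain ⟨j, hjL, rfl⟩ := List.mem_map.mp hx
      simpa using hwne j ((hLmem j).mp hjL)
    exact h3 ▸ (h1.filter _)
  have hfle : listVar (L.map w) ≤ var w := by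
    have : ∀ x ∈ (List.ofFn w).filter (fun x => x ≠ 0), x ≠ 0 := by
      intro x hx
      simpa using List.of_mem_filter hx
    exact listVar_sublist hsub this
  have hub : var w ≤ n - k - 1 := hV w hwV
  have hIpos : 0 < n - k := hI ▸ Finset.card_pos.mpr ⟨a, haI⟩
  omega
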